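/- (Elias bound for b-symbol distance) Let r = 1 - q^{-b}, and let w be an integer with w ≤ rn and w² - 2rnw + rnd > 0. Then A_b(n,d,q) ≤ (rnd / (w² - 2rnw + rnd)) · q^{bn} / (Σ_{i=0}^{w} C(n,i)(q^b-1)^i). -/

import Mathlib

open Finset

/-- Cyclic coordinate access: `cget z k` is the coordinate `z_k`, indices taken mod `n`. -/
def cget {Fq : Type*} [Zero Fq] {n : ℕ} (y : Fin n → Fq) (k : ℕ) : Fq :=
  if h : n = 0 then 0 else y ⟨k % n, Nat.mod_lt k (Nat.pos_of_ne_zero h)⟩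

/-- The `b`-symbol weight of a vector `y ∈ Fq^n`. -/
def wtb {Fq : Type*} [Zero Fq] [DecidableEq Fq] {n : ℕ} (b : ℕ) (y : Fin n → Fq) : ℕ :=
  ((Finset.range n).filter fun i => ∃ j : Fin b, cget y (i + j) ≠ 0).card

/-- The `b`-symbol distance on `Fq^n`. -/
def db {Fq : Type*} [Field Fq] [DecidableEq Fq] {n : ℕ} (b : ℕ) (x y : Fin n → Fq) : ℕ :=
  wtb b (x - y)


/-- `Asize Fq n b d` : the largest size of a code in `Fq^n` with minimum `b`-symbol
distance at least `d`. -/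
noncomputable def Asize (Fq : Type*) [Field Fq] [Fintype Fq] [DecidableEq Fq] (n b d : ℕ) : ℕ :=
  sSup {M | ∃ C : Finset (Fin n → Fq),
    (∀ x ∈ C, ∀ y ∈ C, x ≠ y → d ≤ db b x y) ∧ C.card = M}

/-!
Elias–Bassalygo argument. Averaging over all centres `z`, some Hamming ball of radius `w`
contains at least `|C| V(n,w) / Q^n` codewords. For the `K` codewords in that ball, count the
pairwise distances coordinatewise: with `T ≤ K w` the total distance to the centre,
Cauchy–Schwarz on the symbol frequencies gives `r n K (K - 1) d ≤ 2 r n K T - T²`, and since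
`w ≤ r n` this yields `K (w² - 2 r n w + r n d) ≤ r n d`. The `b`-symbol bound follows by
reading `x ∈ F_q^n` as the vector of its cyclic windows `(x_i, …, x_{i+b-1}) ∈ F_q^b`, which
turns the `b`-symbol distance into the Hamming distance over an alphabet of size `q^b`.
-/

theorem card_filter_eq_eq_sum_sq {α β : Type*} [Fintype β] [DecidableEq β]
    (S : Finset α) (f : α → β) :
    #{p ∈ S ×ˢ S | f p.1 = f p.2} = ∑ b, #{x ∈ S | f x = b} ^ 2 := by
  rw [card_eq_sum_card_fiberwise (f := fun p => f p.1) (t := univ) fun _ _ => mem_univ _]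
  refine sum_congr rfl fun b _ => ?_
  rw [sq, ← card_product]
  congr 1
  ext ⟨x, y⟩
  simp only [mem_filter, mem_product]
  constructor
  · rintro ⟨⟨⟨hx, hy⟩, hxy⟩, rfl⟩
    exact ⟨⟨hx, rfl⟩, hy, hxy.symm⟩
  · rintro ⟨⟨hx, rfl⟩, hy, hxy⟩
    exact ⟨⟨⟨hx, hy⟩, hxy.symm⟩, rfl⟩

theorem one_sub_inv_card_mul_card_filter_ne_le {α F : Type*} [Fintype F]
    [DecidableEq F] (S : Finset α) (f : α → F) (a : F) :
    (1 - (Fintype.card F : ℝ)⁻¹) * #{p ∈ S ×ˢ S | f p.1 ≠ f p.2} ≤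
      2 * (1 - (Fintype.card F : ℝ)⁻¹) * #S * #{x ∈ S | f x ≠ a} -
        (#{x ∈ S | f x ≠ a} : ℝ) ^ 2 := by
  have : Nonempty F := ⟨a⟩
  set Q : ℝ := (Fintype.card F : ℝ)
  set m : F → ℝ := fun b => (#{x ∈ S | f x = b} : ℝ)
  set t : ℝ := (#{x ∈ S | f x ≠ a} : ℝ)
  have hpairs : (#{p ∈ S ×ˢ S | f p.1 ≠ f p.2} : ℝ) = #S ^ 2 - ∑ b, m b ^ 2 := by
    have h := card_filter_add_card_filter_not (s := S ×ˢ S) (fun p => f p.1 = f p.2)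
    rw [card_filter_eq_eq_sum_sq, card_product] at h
    rw [eq_sub_iff_add_eq, add_comm, sq]
    simp only [m]
    exact_mod_cast h
  have hma : m a = #S - t := by
    have h := card_filter_add_card_filter_not (s := S) (fun x => f x = a)
    simp only [m, t, eq_sub_iff_add_eq, ← h]
    push_cast
    rfl
  have hrest : ∑ b ∈ univ.erase a, m b = t := by
    have h : ∑ b, m b = #S := by
      simp only [m]
      exact_mod_cast (card_eq_sum_card_fiberwise (f := f) (s := S) (t := univ)
        fun _ _ => mem_univ _).symm
    rw [← add_sum_erase _ _ (mem_univ a), hma] at h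
    linarith
  have hQpos : 0 < Q := Nat.cast_pos.mpr Fintype.card_pos
  have hCS : t ^ 2 ≤ (Q - 1) * ∑ b ∈ univ.erase a, m b ^ 2 := by
    have h := sq_sum_le_card_mul_sum_sq (s := univ.erase a) (f := m)
    rwa [hrest, card_erase_of_mem (mem_univ a), card_univ,
      Nat.cast_sub Fintype.card_pos, Nat.cast_one] at h
  have key : Q⁻¹ * t ^ 2 ≤ (1 - Q⁻¹) * ∑ b ∈ univ.erase a, m b ^ 2 := by
    rwa [inv_mul_le_iff₀ hQpos, ← mul_assoc, mul_sub, mul_inv_cancel₀ hQpos.ne', mul_one]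
  rw [hpairs, ← add_sum_erase _ _ (mem_univ a), hma]
  linear_combination key

theorem card_mul_card_sub_card_mul_le_sum {α : Type*} [DecidableEq α] (δ : α → α → ℕ)
    {S : Finset α} {d : ℕ} (hS : ∀ x ∈ S, ∀ y ∈ S, x ≠ y → d ≤ δ x y) :
    (#S * #S - #S) * d ≤ ∑ p ∈ S ×ˢ S, δ p.1 p.2 := by
  rw [← offDiag_card, ← smul_eq_mul]
  calc #S.offDiag • d ≤ ∑ p ∈ S.offDiag, δ p.1 p.2 :=
        card_nsmul_le_sum _ _ _ fun p hp => by
          obtain ⟨hx, hy, hxy⟩ := mem_offDiag.mp hp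
          exact hS _ hx _ hy hxy
    _ ≤ ∑ p ∈ S ×ˢ S, δ p.1 p.2 := by
      rw [← product_sdiff_diag]
      exact sum_le_sum_of_subset sdiff_subset

theorem sum_hammingDist_eq_sum_card_filter_ne {γ ι F : Type*} [Fintype ι] [DecidableEq F]
    (P : Finset γ) (u v : γ → ι → F) :
    ∑ p ∈ P, hammingDist (u p) (v p) = ∑ i, #{p ∈ P | u p i ≠ v p i} := by
  simp only [hammingDist, card_filter]
  exact sum_comm

section HammingSpace

variable {ι F : Type*} [Fintype ι] [Fintype F] [DecidableEq F]

theorem card_filter_support_ne_eq [DecidableEq ι] (z : ι → F) (s : Finset ι) :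
    #{x : ι → F | ({i | x i ≠ z i} : Finset ι) = s} = (Fintype.card F - 1) ^ #s := by
  have hpi : ({x : ι → F | ({i | x i ≠ z i} : Finset ι) = s} : Finset _) =
      Fintype.piFinset fun i => if i ∈ s then univ.erase (z i) else {z i} := by
    ext x
    simp only [Finset.ext_iff, mem_filter, mem_univ, true_and, Fintype.mem_piFinset]
    refine forall_congr' fun i => ?_
    split_ifs with h <;> simp [h]
  rw [hpi, Fintype.card_piFinset]
  simp only [apply_ite card, card_erase_of_mem (mem_univ _), card_univ, card_singleton]
  rw [prod_ite_mem, univ_inter, prod_const]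

theorem card_filter_hammingDist_eq [DecidableEq ι] (z : ι → F) (k : ℕ) :
    #{x : ι → F | hammingDist x z = k} =
      (Fintype.card ι).choose k * (Fintype.card F - 1) ^ k := by
  have hfiber : ∀ s ∈ powersetCard k (univ : Finset ι),
      #{x ∈ {x : ι → F | hammingDist x z = k} | ({i | x i ≠ z i} : Finset ι) = s} =
        (Fintype.card F - 1) ^ k := by
    intro s hs
    rw [mem_powersetCard_univ] at hs
    rw [filter_filter, ← hs, ← card_filter_support_ne_eq z s]
    congr 1
    refine filter_congr fun x _ => and_iff_right_of_imp fun hx => ?_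
    rw [hammingDist, hx]
  rw [card_eq_sum_card_fiberwise (f := fun x => ({i | x i ≠ z i} : Finset ι))
      (t := powersetCard k univ) fun x hx => by simpa [hammingDist] using hx,
    sum_congr rfl hfiber, sum_const, card_powersetCard, card_univ, smul_eq_mul]

theorem card_filter_hammingDist_le [DecidableEq ι] (z : ι → F) (w : ℕ) :
    #{x : ι → F | hammingDist x z ≤ w} =
      ∑ k ∈ range (w + 1), (Fintype.card ι).choose k * (Fintype.card F - 1) ^ k := by
  rw [card_eq_sum_card_fiberwise (f := fun x => hammingDist x z) (t := range (w + 1))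
    fun x hx => by simpa [Nat.lt_succ_iff] using hx]
  refine sum_congr rfl fun k hk => ?_
  rw [filter_filter, ← card_filter_hammingDist_eq z k]
  congr 1
  refine filter_congr fun x _ => and_iff_right_of_imp fun hx => ?_
  rw [hx]; exact Nat.lt_succ_iff.mp (mem_range.mp hk)

theorem exists_card_mul_le_card_filter_hammingDist_le [DecidableEq ι] [Nonempty F]
    (C : Finset (ι → F)) (w : ℕ) :
    ∃ z : ι → F,
      #C * ∑ k ∈ range (w + 1), (Fintype.card ι).choose k * (Fintype.card F - 1) ^ k ≤
        #{x ∈ C | hammingDist x z ≤ w} * Fintype.card F ^ Fintype.card ι := by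
  set V := ∑ k ∈ range (w + 1), (Fintype.card ι).choose k * (Fintype.card F - 1) ^ k
  have hsum : ∑ z : ι → F, #{x ∈ C | hammingDist x z ≤ w} = #C * V := by
    have h := sum_card_bipartiteAbove_eq_sum_card_bipartiteBelow (s := univ) (t := C)
      (r := fun z x => hammingDist x z ≤ w)
    simp only [bipartiteAbove, bipartiteBelow] at h
    rw [h, sum_congr rfl fun x _ => ?_, sum_const, smul_eq_mul]
    simp_rw [hammingDist_comm x]
    exact card_filter_hammingDist_le x w
  obtain ⟨z, -, hz⟩ := exists_le_of_sum_le univ_nonempty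
    (f := fun _ => #C * V)
    (g := fun z => #{x ∈ C | hammingDist x z ≤ w} * Fintype.card F ^ Fintype.card ι)
    (by rw [sum_const, ← sum_mul, hsum, card_univ, Fintype.card_fun, smul_eq_mul, mul_comm])
  exact ⟨z, hz⟩

theorem one_sub_inv_card_mul_sum_hammingDist_le (S : Finset (ι → F)) (z : ι → F) :
    (1 - (Fintype.card F : ℝ)⁻¹) * Fintype.card ι *
        ((∑ p ∈ S ×ˢ S, hammingDist p.1 p.2 : ℕ) : ℝ) ≤
      2 * (1 - (Fintype.card F : ℝ)⁻¹) * Fintype.card ι * #S *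
          ((∑ x ∈ S, hammingDist x z : ℕ) : ℝ) -
        ((∑ x ∈ S, hammingDist x z : ℕ) : ℝ) ^ 2 := by
  set r : ℝ := 1 - (Fintype.card F : ℝ)⁻¹
  set n : ℝ := (Fintype.card ι : ℝ)
  set t : ι → ℝ := fun i => (#{x ∈ S | x i ≠ z i} : ℝ)
  have hD : ((∑ p ∈ S ×ˢ S, hammingDist p.1 p.2 : ℕ) : ℝ) =
      ∑ i, (#{p ∈ S ×ˢ S | p.1 i ≠ p.2 i} : ℝ) := by
    exact_mod_cast sum_hammingDist_eq_sum_card_filter_ne (S ×ˢ S) Prod.fst Prod.snd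
  have hT : ((∑ x ∈ S, hammingDist x z : ℕ) : ℝ) = ∑ i, t i := by
    have h := sum_hammingDist_eq_sum_card_filter_ne S id fun _ => z
    simp only [id] at h
    simp only [t, h]
    push_cast
    rfl
  have hcoord : r * ∑ i, (#{p ∈ S ×ˢ S | p.1 i ≠ p.2 i} : ℝ) ≤
      2 * r * #S * ∑ i, t i - ∑ i, t i ^ 2 := by
    rw [mul_sum, mul_sum, ← sum_sub_distrib]
    exact sum_le_sum fun i _ => one_sub_inv_card_mul_card_filter_ne_le S (· i) (z i)
  have hCS : (∑ i, t i) ^ 2 ≤ n * ∑ i, t i ^ 2 := by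
    simpa [n] using sq_sum_le_card_mul_sum_sq (s := univ) (f := t)
  have hn : 0 ≤ n := Nat.cast_nonneg _
  rw [hD, hT]
  nlinarith [mul_le_mul_of_nonneg_left hcoord hn]

theorem card_mul_le_of_forall_hammingDist_le {S : Finset (ι → F)} {z : ι → F} {d w : ℕ}
    (hball : ∀ x ∈ S, hammingDist x z ≤ w)
    (hS : ∀ x ∈ S, ∀ y ∈ S, x ≠ y → d ≤ hammingDist x y)
    (hw : (w : ℝ) ≤ (1 - (Fintype.card F : ℝ)⁻¹) * Fintype.card ι) :
    #S * ((w : ℝ) ^ 2 - 2 * ((1 - (Fintype.card F : ℝ)⁻¹) * Fintype.card ι) * w +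
        ((1 - (Fintype.card F : ℝ)⁻¹) * Fintype.card ι) * d) ≤
      ((1 - (Fintype.card F : ℝ)⁻¹) * Fintype.card ι) * d := by
  set ρ : ℝ := (1 - (Fintype.card F : ℝ)⁻¹) * Fintype.card ι
  have hρ : 0 ≤ ρ := (Nat.cast_nonneg w).trans hw
  rcases S.eq_empty_or_nonempty with rfl | hne
  · simpa using mul_nonneg hρ (Nat.cast_nonneg d)
  set K : ℝ := (#S : ℝ)
  set T : ℝ := ((∑ x ∈ S, hammingDist x z : ℕ) : ℝ)
  set D : ℝ := ((∑ p ∈ S ×ˢ S, hammingDist p.1 p.2 : ℕ) : ℝ)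
  have hK : 0 < K := by simpa [K] using hne.card_pos
  have hlow : K * (K - 1) * d ≤ D := by
    have h : (((#S * #S - #S) * d : ℕ) : ℝ) ≤ D :=
      Nat.cast_le.mpr (card_mul_card_sub_card_mul_le_sum hammingDist hS)
    rw [Nat.cast_mul, Nat.cast_sub (Nat.le_mul_self _), Nat.cast_mul] at h
    linarith
  have hup : ρ * D ≤ 2 * ρ * K * T - T ^ 2 := by
    have h := one_sub_inv_card_mul_sum_hammingDist_le S z
    simp only [ρ]
    linarith
  have hT : T ≤ K * w := by
    have h := sum_le_sum hball
    rw [sum_const, smul_eq_mul] at h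
    simpa [T, K] using (Nat.cast_le (α := ℝ)).mpr h
  -- `T ↦ 2ρKT - T²` increases up to `T = ρK ≥ Kw`
  have hmono : 2 * ρ * K * T - T ^ 2 ≤ 2 * ρ * K * (K * w) - (K * w) ^ 2 := by
    nlinarith [mul_le_mul_of_nonneg_left hw hK.le]
  have hK' : K * (K * ((w : ℝ) ^ 2 - 2 * ρ * w + ρ * d) - ρ * d) ≤ 0 := by
    nlinarith [mul_le_mul_of_nonneg_left hlow hρ]
  nlinarith [nonpos_of_mul_nonpos_right hK' hK]

theorem card_le_elias_bound [DecidableEq ι] [Nonempty F] {C : Finset (ι → F)} {d w : ℕ}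
    (hC : ∀ x ∈ C, ∀ y ∈ C, x ≠ y → d ≤ hammingDist x y)
    (hw : (w : ℝ) ≤ (1 - (Fintype.card F : ℝ)⁻¹) * Fintype.card ι)
    (hpos : 0 < (w : ℝ) ^ 2 - 2 * ((1 - (Fintype.card F : ℝ)⁻¹) * Fintype.card ι) * w +
        ((1 - (Fintype.card F : ℝ)⁻¹) * Fintype.card ι) * d) :
    (#C : ℝ) ≤
      ((1 - (Fintype.card F : ℝ)⁻¹) * Fintype.card ι) * d /
          ((w : ℝ) ^ 2 - 2 * ((1 - (Fintype.card F : ℝ)⁻¹) * Fintype.card ι) * w +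
            ((1 - (Fintype.card F : ℝ)⁻¹) * Fintype.card ι) * d) *
        ((Fintype.card F : ℝ) ^ Fintype.card ι /
          ∑ k ∈ range (w + 1),
            ((Fintype.card ι).choose k : ℝ) * ((Fintype.card F : ℝ) - 1) ^ k) := by
  obtain ⟨z, hz⟩ := exists_card_mul_le_card_filter_hammingDist_le C w
  have hJ := card_mul_le_of_forall_hammingDist_le (S := {x ∈ C | hammingDist x z ≤ w}) (z := z)
    (fun x hx => (mem_filter.mp hx).2)
    (fun x hx y hy => hC x (mem_filter.mp hx).1 y (mem_filter.mp hy).1) hw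
  have hQ : (1 : ℝ) ≤ Fintype.card F := Nat.one_le_cast.mpr Fintype.card_pos
  have hz' : (#C : ℝ) * ∑ k ∈ range (w + 1),
      ((Fintype.card ι).choose k : ℝ) * ((Fintype.card F : ℝ) - 1) ^ k ≤
        #{x ∈ C | hammingDist x z ≤ w} * (Fintype.card F : ℝ) ^ Fintype.card ι := by
    have h := Nat.cast_le (α := ℝ) |>.mpr hz
    push_cast [Nat.cast_sub Fintype.card_pos] at h
    exact h
  have hV : 0 < ∑ k ∈ range (w + 1),
      ((Fintype.card ι).choose k : ℝ) * ((Fintype.card F : ℝ) - 1) ^ k :=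
    sum_pos' (fun k _ => by have := sub_nonneg.mpr hQ; positivity)
      ⟨0, mem_range.mpr w.succ_pos, by simp⟩
  rw [div_mul_div_comm, le_div_iff₀ (mul_pos hpos hV)]
  nlinarith [mul_le_mul_of_nonneg_right hz' hpos.le,
    mul_le_mul_of_nonneg_right hJ (pow_nonneg (zero_le_one.trans hQ) (Fintype.card ι))]

end HammingSpace

theorem cget_val {Fq : Type*} [Zero Fq] {n : ℕ} (x : Fin n → Fq) (i : Fin n) :
    cget x i = x i := by
  simp [cget, Nat.mod_eq_of_lt i.2, (Nat.zero_le i).trans_lt i.2 |>.ne']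

theorem cget_sub {Fq : Type*} [AddGroup Fq] {n : ℕ} (x y : Fin n → Fq) (k : ℕ) :
    cget (x - y) k = cget x k - cget y k := by
  unfold cget
  split_ifs <;> simp

def bSymbolVector {Fq : Type*} [Zero Fq] {n : ℕ} (b : ℕ) (x : Fin n → Fq) :
    Fin n → Fin b → Fq :=
  fun i j => cget x (i + j)

theorem bSymbolVector_injective {Fq : Type*} [Zero Fq] {n b : ℕ} (hb : 1 ≤ b) :
    Function.Injective (bSymbolVector (Fq := Fq) (n := n) b) := fun x y h =>
  funext fun i => by simpa [bSymbolVector, cget_val] using congrFun (congrFun h i) ⟨0, hb⟩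

theorem hammingDist_bSymbolVector {Fq : Type*} [Field Fq] [DecidableEq Fq] {n b : ℕ}
    (x y : Fin n → Fq) : hammingDist (bSymbolVector b x) (bSymbolVector b y) = db b x y := by
  rw [db, wtb, hammingDist, card_filter, card_filter,
    ← Fin.sum_univ_eq_sum_range
      (fun i => if ∃ j : Fin b, cget (x - y) (i + j) ≠ 0 then 1 else 0)]
  refine sum_congr rfl fun i _ => if_congr ?_ rfl rfl
  simp only [bSymbolVector, ne_eq, funext_iff, not_forall, cget_sub, sub_eq_zero]

theorem exists_card_eq_Asize (Fq : Type*) [Field Fq] [Fintype Fq] [DecidableEq Fq]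
    (n b d : ℕ) :
    ∃ C : Finset (Fin n → Fq), (∀ x ∈ C, ∀ y ∈ C, x ≠ y → d ≤ db b x y) ∧
      #C = Asize Fq n b d :=
  Nat.sSup_mem (s := {M | ∃ C : Finset (Fin n → Fq),
      (∀ x ∈ C, ∀ y ∈ C, x ≠ y → d ≤ db b x y) ∧ C.card = M}) ⟨0, ∅, by simp⟩
    ⟨Fintype.card (Fin n → Fq), by rintro _ ⟨C, -, rfl⟩; exact card_le_univ C⟩

theorem elias_bound_general {Fq : Type*} [Field Fq] [Fintype Fq] [DecidableEq Fq]
    {n d b w : ℕ} (hb1 : 1 ≤ b)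
    (hw : (w : ℝ) ≤ (1 - ((Fintype.card Fq : ℝ) ^ b)⁻¹) * n)
    (hpos : 0 < (w : ℝ) ^ 2 - 2 * ((1 - ((Fintype.card Fq : ℝ) ^ b)⁻¹) * n) * w
        + ((1 - ((Fintype.card Fq : ℝ) ^ b)⁻¹) * n) * d) :
    (Asize Fq n b d : ℝ) ≤
      (((1 - ((Fintype.card Fq : ℝ) ^ b)⁻¹) * n) * d /
          ((w : ℝ) ^ 2 - 2 * ((1 - ((Fintype.card Fq : ℝ) ^ b)⁻¹) * n) * w
            + ((1 - ((Fintype.card Fq : ℝ) ^ b)⁻¹) * n) * d)) *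
        ((Fintype.card Fq : ℝ) ^ (b * n) /
          ∑ i ∈ Finset.range (w + 1),
            (n.choose i : ℝ) * ((Fintype.card Fq : ℝ) ^ b - 1) ^ i) := by
  obtain ⟨C, hC, hCcard⟩ := exists_card_eq_Asize Fq n b d
  have hcard : (Fintype.card (Fin b → Fq) : ℝ) = (Fintype.card Fq : ℝ) ^ b := by
    simp
  have hcode : ∀ u ∈ C.image (bSymbolVector b), ∀ v ∈ C.image (bSymbolVector b),
      u ≠ v → d ≤ hammingDist u v := by
    simp only [mem_image]
    rintro _ ⟨x, hx, rfl⟩ _ ⟨y, hy, rfl⟩ hxy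
    rw [hammingDist_bSymbolVector]
    exact hC x hx y hy (ne_of_apply_ne _ hxy)
  have h := card_le_elias_bound hcode (w := w)
    (by rwa [hcard, Fintype.card_fin]) (by rwa [hcard, Fintype.card_fin])
  rwa [card_image_of_injective C (bSymbolVector_injective hb1), hCcard, hcard,
    Fintype.card_fin, ← pow_mul] at h

/-- Corollary 4.10 (Elias bound for the `b`-symbol distance): with `r = 1 - q^{-b}`,
if `w ≤ r n` and `w² - 2 r n w + r n d > 0` then
`A_b(n,d,q) ≤ (r n d / (w² - 2 r n w + r n d)) · q^{bn} / Σ_{i=0}^{w} C(n,i)(q^b-1)^i`. -/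
theorem elias_bound {Fq : Type*} [Field Fq] [Fintype Fq] [DecidableEq Fq]
    {n d b w : ℕ} (hb1 : 1 ≤ b) (hbn : b ≤ n) (hd : 1 ≤ d) (hdn : d ≤ n)
    (hw : (w : ℝ) ≤ (1 - ((Fintype.card Fq : ℝ) ^ b)⁻¹) * n)
    (hpos : 0 < (w : ℝ) ^ 2 - 2 * ((1 - ((Fintype.card Fq : ℝ) ^ b)⁻¹) * n) * w
        + ((1 - ((Fintype.card Fq : ℝ) ^ b)⁻¹) * n) * d) :
    (Asize Fq n b d : ℝ) ≤
      (((1 - ((Fintype.card Fq : ℝ) ^ b)⁻¹) * n) * d /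
          ((w : ℝ) ^ 2 - 2 * ((1 - ((Fintype.card Fq : ℝ) ^ b)⁻¹) * n) * w
            + ((1 - ((Fintype.card Fq : ℝ) ^ b)⁻¹) * n) * d)) *
        ((Fintype.card Fq : ℝ) ^ (b * n) /
          ∑ i ∈ Finset.range (w + 1),
            (n.choose i : ℝ) * ((Fintype.card Fq : ℝ) ^ b - 1) ^ i) :=
  elias_bound_general hb1 hw hpos
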